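/- arXiv:2409.05248 — 3 statements merged into one kernel-verified Lean document; each statement's English description precedes it below -/
import Mathlib

section
/- Let S be a smooth space-filling hypersurface of degree q+2 in P^n over F_q. Then every F_q-line is either tangent to S at exactly one F_q-point, or is completely contained in S (and hence tangent at all q+1 of its F_q-points). -/
open MvPolynomial

/-- Evaluation over the algebraic closure of a polynomial with coefficients in `F`. -/
noncomputable def evalK (F : Type*) [Field F] {m : ℕ} (g : MvPolynomial (Fin m) F)
    (v : Fin m → AlgebraicClosure F) : AlgebraicClosure F :=
  eval v (map (algebraMap F (AlgebraicClosure F)) g)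

/-- The point `s·a + t·b` of the algebraic-closure points of the `F_q`-line spanned by `a, b`. -/
noncomputable def linePt (F : Type*) [Field F] {m : ℕ} (a b : Fin m → F)
    (s t : AlgebraicClosure F) : Fin m → AlgebraicClosure F :=
  fun i => s * algebraMap F (AlgebraicClosure F) (a i) +
    t * algebraMap F (AlgebraicClosure F) (b i)

/-- The hypersurface defined by `g` is smooth: the gradient does not vanish at any
nonzero point of the affine cone over the algebraic closure. -/
def SmoothHyp (F : Type*) [Field F] {m : ℕ} (g : MvPolynomial (Fin m) F) : Prop :=
  ∀ v : Fin m → AlgebraicClosure F, v ≠ 0 → evalK F g v = 0 →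
    ∃ i, evalK F (pderiv i g) v ≠ 0

/-- The hypersurface defined by `g` contains every `F_q`-rational point. -/
def SpaceFilling (F : Type*) [Field F] {m : ℕ} (g : MvPolynomial (Fin m) F) : Prop :=
  ∀ v : Fin m → F, eval v g = 0

/-- The `F_q`-line spanned by `a, b` is tangent to the hypersurface of `g`: at some point
of the line lying on the hypersurface, either the point is singular, or the whole line lies
in the tangent hyperplane there. -/
noncomputable def TangentLine (F : Type*) [Field F] {m : ℕ} (g : MvPolynomial (Fin m) F)
    (a b : Fin m → F) : Prop :=
  ∃ s t : AlgebraicClosure F, (s ≠ 0 ∨ t ≠ 0) ∧ evalK F g (linePt F a b s t) = 0 ∧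
    ((∀ i, evalK F (pderiv i g) (linePt F a b s t) = 0) ∨
      ((∑ j, evalK F (pderiv j g) (linePt F a b s t) *
          algebraMap F (AlgebraicClosure F) (a j)) = 0 ∧
       (∑ j, evalK F (pderiv j g) (linePt F a b s t) *
          algebraMap F (AlgebraicClosure F) (b j)) = 0))

/-- The `F_q`-line spanned by `a, b` is entirely contained in the hypersurface of `g`. -/
noncomputable def ContainedLine (F : Type*) [Field F] {m : ℕ} (g : MvPolynomial (Fin m) F)
    (a b : Fin m → F) : Prop :=
  ∀ s t : AlgebraicClosure F, evalK F g (linePt F a b s t) = 0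

/-- Tangency of the hypersurface of `g` to the line spanned by `a, b` at the `F_q`-point
with parameters `(s : t)`. -/
def FTangentAt (F : Type*) [Field F] {m : ℕ} (g : MvPolynomial (Fin m) F)
    (a b : Fin m → F) (s t : F) : Prop :=
  eval (s • a + t • b) g = 0 ∧
    ((∀ i, eval (s • a + t • b) (pderiv i g) = 0) ∨
      ((∑ j, eval (s • a + t • b) (pderiv j g) * a j) = 0 ∧
       (∑ j, eval (s • a + t • b) (pderiv j g) * b j) = 0))

/-! Restricted to the line, `f` becomes a binary form `G(s, t) = f(s a + t b)` of degree `q + 2`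
vanishing on all of `𝔽_q²`. Dehomogenizing and dividing by `X^q - X` gives
`G = (s^q t - s t^q) · ℓ` with `ℓ` linear. As `s^q t - s t^q` vanishes on `𝔽_q²` and `q = 0` in
`𝔽_q`, the gradient of `G` at a rational point is `ℓ(s, t) · (-t, s)`, so the rational points of
tangency are exactly the zeros of `ℓ`: all of them when `ℓ = 0` (then `G = 0` and the line lies
on `S`), and a single projective point otherwise. -/

theorem Derivation.map_mvPolynomial_aeval {R A M σ : Type*} [CommRing R] [CommRing A]
    [Algebra R A] [AddCommGroup M] [Module A M] [Module R M] [IsScalarTower R A M] [Fintype σ]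
    (D : Derivation R A M) (g : σ → A) (p : MvPolynomial σ R) :
    D (aeval g p) = ∑ j, aeval g (pderiv j p) • D (g j) := by
  classical
  induction p using MvPolynomial.induction_on with
  | C r => simp
  | add p p' hp hp' => simp only [map_add, hp, hp', add_smul, Finset.sum_add_distrib]
  | mul_X p i hp =>
    rw [map_mul, aeval_X, Derivation.leibniz, hp, Finset.smul_sum]
    simp only [pderiv_mul, pderiv_X, map_add, map_mul, aeval_X, add_smul, Finset.sum_add_distrib,
      smul_smul, Pi.single_apply, apply_ite (aeval g), map_zero, mul_ite, mul_one, mul_zero,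
      ite_smul, zero_smul, Finset.sum_ite_eq, Finset.mem_univ, if_true, mul_comm (g i)]
    exact add_comm _ _

open Polynomial in
theorem FiniteField.X_pow_card_sub_X_dvd {F : Type*} [Field F] [Fintype F] {p : F[X]}
    (hp : ∀ x, p.eval x = 0) : Polynomial.X ^ Fintype.card F - Polynomial.X ∣ p := by
  rcases eq_or_ne p 0 with rfl | hp0
  · exact dvd_zero _
  have hmonic : (Polynomial.X ^ Fintype.card F - Polynomial.X : F[X]).Monic :=
    monic_X_pow_sub (by rw [degree_X]; exact_mod_cast Fintype.one_lt_card)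
  rw [← prod_multiset_X_sub_C_of_monic_of_roots_card_eq hmonic
      (by rw [FiniteField.roots_X_pow_card_sub_X, FiniteField.X_pow_card_sub_X_natDegree_eq _
        Fintype.one_lt_card, ← Finset.card_def, Finset.card_univ]),
    Multiset.prod_X_sub_C_dvd_iff_le_roots hp0, FiniteField.roots_X_pow_card_sub_X,
    Multiset.le_iff_subset Finset.univ.nodup]
  intro x _
  exact (mem_roots hp0).mpr (hp x)

open Polynomial in
theorem Polynomial.eval_homogenize_one_zero {R : Type*} [CommSemiring R] (p : R[X]) (n : ℕ) :
    MvPolynomial.eval ![1, 0] (p.homogenize n) = p.coeff n := by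
  induction p using Polynomial.induction_on' with
  | add p p' hp hp' => simp [hp, hp']
  | monomial k r =>
    rcases le_or_gt k n with hk | hk
    · rw [homogenize_monomial hk, MvPolynomial.eval_monomial]
      rcases hk.eq_or_lt with rfl | hk
      · simp
      · simp [coeff_monomial, hk.ne, Nat.sub_ne_zero_of_lt hk]
    · simp [homogenize_monomial_of_lt hk, coeff_monomial, hk.ne']

namespace MvPolynomial

/-- Up to sign the Moore determinant `det [[X₀, X₁], [X₀^q, X₁^q]]`; over `𝔽_q` it is the product
of the linear forms vanishing at the `q + 1` points of `ℙ¹(𝔽_q)`. -/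
noncomputable def mooreForm (R : Type*) [CommRing R] (q : ℕ) : MvPolynomial (Fin 2) R :=
  X 0 ^ q * X 1 - X 0 * X 1 ^ q

theorem homogenize_X_pow_sub_X {R : Type*} [CommRing R] {q : ℕ} (hq : 1 ≤ q) :
    (Polynomial.X ^ q - Polynomial.X : Polynomial R).homogenize (q + 1) = mooreForm R q := by
  rw [Polynomial.homogenize_sub, Polynomial.homogenize_X_pow (by omega),
    Polynomial.homogenize_X (by omega), mooreForm, Nat.add_sub_cancel_left, Nat.add_sub_cancel,
    pow_one]

section FiniteField

variable {F : Type*} [Field F] [Fintype F]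

theorem IsHomogeneous.exists_eq_mooreForm_mul {G : MvPolynomial (Fin 2) F}
    (hG : G.IsHomogeneous (Fintype.card F + 2)) (hG0 : ∀ v, eval v G = 0) :
    ∃ c d : F, G = mooreForm F (Fintype.card F) * (C c * X 0 + C d * X 1) := by
  set q := Fintype.card F
  set P : Polynomial F := MvPolynomial.aeval ![Polynomial.X, 1] G
  have hPG : P.homogenize (q + 2) = G := Polynomial.homogenize_eq_of_isHomogeneous hG rfl
  have hPtop : P.coeff (q + 2) = 0 := by
    rw [← Polynomial.eval_homogenize_one_zero, hPG, hG0]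
  have hPdeg : P.natDegree ≤ q + 1 := by
    refine Polynomial.natDegree_le_iff_coeff_eq_zero.mpr fun k hk => ?_
    obtain rfl | hk := (Nat.succ_le_of_lt hk).eq_or_lt
    · exact hPtop
    refine Polynomial.coeff_eq_zero_of_natDegree_lt (lt_of_le_of_lt ?_ hk)
    simpa using aeval_natDegree_le G hG.totalDegree_le _ (n := 1) (by simp [Fin.forall_fin_two])
  obtain ⟨r, hr⟩ : Polynomial.X ^ q - Polynomial.X ∣ P := by
    refine FiniteField.X_pow_card_sub_X_dvd fun x => ?_
    have hx := hG0 ![x, 1]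
    rw [← hPG, Polynomial.eval_homogenize (hPdeg.trans (Nat.le_succ _)) _ (by simp)] at hx
    simpa using hx
  have hrdeg : r.natDegree ≤ 1 := by
    rcases eq_or_ne r 0 with rfl | hr0
    · simp
    have := hr ▸ hPdeg
    rw [Polynomial.natDegree_mul (FiniteField.X_pow_card_sub_X_ne_zero F Fintype.one_lt_card) hr0,
      FiniteField.X_pow_card_sub_X_natDegree_eq F Fintype.one_lt_card] at this
    omega
  refine ⟨r.coeff 1, r.coeff 0, ?_⟩
  rw [← hPG, hr, Polynomial.homogenize_mul _ _ (m := q + 1) (n := 1)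
      ((FiniteField.X_pow_card_sub_X_natDegree_eq F Fintype.one_lt_card).le.trans (Nat.le_succ _))
      hrdeg, homogenize_X_pow_sub_X Fintype.card_pos,
    Polynomial.eq_X_add_C_of_natDegree_le_one hrdeg]
  congr 1
  simp

theorem eval_pderiv_mooreForm_mul (L : MvPolynomial (Fin 2) F) (v : Fin 2 → F) (i : Fin 2) :
    eval v (pderiv i (mooreForm F (Fintype.card F) * L)) = ![-v 1, v 0] i * eval v L := by
  fin_cases i <;> simp [mooreForm, FiniteField.pow_card, mul_comm]

end FiniteField

section LineRestriction

variable {R σ : Type*} [CommRing R]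

noncomputable def lineRestrict (a b : σ → R) : MvPolynomial σ R →ₐ[R] MvPolynomial (Fin 2) R :=
  aeval fun j => C (a j) * X 0 + C (b j) * X 1

variable (a b : σ → R)

theorem aeval_lineRestrict {A : Type*} [CommRing A] [Algebra R A] (v : Fin 2 → A)
    (g : MvPolynomial σ R) :
    aeval v (lineRestrict a b g) =
      aeval (fun j => v 0 * algebraMap R A (a j) + v 1 * algebraMap R A (b j)) g := by
  rw [lineRestrict, comp_aeval_apply]
  congr 2 with j
  simp [mul_comm]

theorem eval_lineRestrict (v : Fin 2 → R) (g : MvPolynomial σ R) :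
    eval v (lineRestrict a b g) = eval (v 0 • a + v 1 • b) g := by
  rw [← aeval_eq_eval, aeval_lineRestrict, aeval_eq_eval]
  congr 1 with j

theorem IsHomogeneous.lineRestrict {g : MvPolynomial σ R} {n : ℕ} (hg : g.IsHomogeneous n) :
    (lineRestrict a b g).IsHomogeneous n := by
  rw [MvPolynomial.lineRestrict]
  simpa only [one_mul] using
    hg.aeval _ fun j => (isHomogeneous_C_mul_X (a j) 0).add (isHomogeneous_C_mul_X (b j) 1)

theorem eval_pderiv_lineRestrict [Fintype σ] (v : Fin 2 → R) (i : Fin 2) (g : MvPolynomial σ R) :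
    eval v (pderiv i (lineRestrict a b g)) =
      ∑ j, eval (v 0 • a + v 1 • b) (pderiv j g) * ![a, b] i j := by
  rw [lineRestrict, Derivation.map_mvPolynomial_aeval, map_sum]
  refine Finset.sum_congr rfl fun j _ => ?_
  rw [smul_eq_mul, map_mul, ← lineRestrict, eval_lineRestrict]
  fin_cases i <;> simp

end LineRestriction

end MvPolynomial

theorem evalK_linePt {F : Type*} [Field F] {m : ℕ} (g : MvPolynomial (Fin m) F) (a b : Fin m → F)
    (s t : AlgebraicClosure F) :
    evalK F g (linePt F a b s t) = aeval ![s, t] (lineRestrict a b g) := by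
  rw [evalK, eval_map, aeval_lineRestrict, aeval_def]
  rfl

theorem fTangentAt_iff {F : Type*} [Field F] {m : ℕ} (g : MvPolynomial (Fin m) F)
    (a b : Fin m → F) (s t : F) :
    FTangentAt F g a b s t ↔
      eval (s • a + t • b) g = 0 ∧ ∀ i, eval ![s, t] (pderiv i (lineRestrict a b g)) = 0 := by
  simp only [FTangentAt, Fin.forall_fin_two, eval_pderiv_lineRestrict, Matrix.cons_val_zero,
    Matrix.cons_val_one]
  exact and_congr_right fun _ => or_iff_right_of_imp fun h => by simp [h]

theorem exists_ne_zero_eq_mul_of_mul_add_mul_eq_zero {F : Type*} [Field F] {c d s t : F}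
    (hcd : c ≠ 0 ∨ d ≠ 0) (hst : s ≠ 0 ∨ t ≠ 0) (h : c * s + d * t = 0) :
    ∃ k ≠ 0, s = k * d ∧ t = k * -c := by
  rcases eq_or_ne d 0 with rfl | hd
  · have hc : c ≠ 0 := by simpa using hcd
    have hs : s = 0 := by simpa [hc] using h
    have ht : t ≠ 0 := by simpa [hs] using hst
    exact ⟨-t / c, by simp [hc, ht], by simp [hs], by field_simp⟩
  · have hs : s ≠ 0 := by
      rintro rfl
      simp_all
    refine ⟨s / d, div_ne_zero hs hd, by field_simp, ?_⟩
    field_simp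
    linear_combination h

theorem lineDichotomy_deg_q_add_two_general (q n : ℕ) (F : Type*) [Field F] [Fintype F]
    (hq : Fintype.card F = q)
    (f : MvPolynomial (Fin (n + 1)) F) (hhom : f.IsHomogeneous (q + 2))
    (hfill : SpaceFilling F f) :
    ∀ a b : Fin (n + 1) → F, LinearIndependent F ![a, b] →
      ((∃ s t : F, (s ≠ 0 ∨ t ≠ 0) ∧ FTangentAt F f a b s t ∧
          ∀ s' t' : F, (s' ≠ 0 ∨ t' ≠ 0) → FTangentAt F f a b s' t' →
            ∃ c : F, c ≠ 0 ∧ s' = c * s ∧ t' = c * t) ∨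
        (ContainedLine F f a b ∧
          ∀ s t : F, (s ≠ 0 ∨ t ≠ 0) → FTangentAt F f a b s t)) := by
  intro a b _
  subst hq
  obtain ⟨c, d, hG⟩ := (hhom.lineRestrict a b).exists_eq_mooreForm_mul fun v => by
    rw [eval_lineRestrict]
    exact hfill _
  have htan : ∀ s t : F, (s ≠ 0 ∨ t ≠ 0) → (FTangentAt F f a b s t ↔ c * s + d * t = 0) := by
    intro s t hst
    simp only [fTangentAt_iff, hfill _, true_and, Fin.forall_fin_two, hG,
      eval_pderiv_mooreForm_mul, Matrix.cons_val_zero, Matrix.cons_val_one, Matrix.cons_val_fin_one,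
      map_add, map_mul, eval_C, eval_X, neg_eq_zero, mul_eq_zero]
    tauto
  by_cases hcd : c = 0 ∧ d = 0
  · obtain ⟨rfl, rfl⟩ := hcd
    refine Or.inr ⟨fun s t => ?_, fun s t hst => (htan s t hst).mpr (by simp)⟩
    simp [evalK_linePt, hG]
  · have hcd : c ≠ 0 ∨ d ≠ 0 := by tauto
    have hdc : d ≠ 0 ∨ -c ≠ 0 := hcd.symm.imp id neg_ne_zero.mpr
    refine Or.inl ⟨d, -c, hdc, (htan _ _ hdc).mpr (by ring), fun s' t' hst' h' => ?_⟩
    exact exists_ne_zero_eq_mul_of_mul_add_mul_eq_zero hcd hst' ((htan s' t' hst').mp h')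

/-- For a smooth space-filling hypersurface `S` of degree `q+2` in `ℙⁿ`
over `F_q`, every `F_q`-line is either tangent to `S` at exactly one `F_q`-point, or is
completely contained in `S` (and hence tangent at all of its `F_q`-points). -/
theorem lineDichotomy_deg_q_add_two (q n : ℕ) (F : Type*) [Field F] [Fintype F]
    (hq : Fintype.card F = q)
    (f : MvPolynomial (Fin (n + 1)) F) (hf0 : f ≠ 0) (hhom : f.IsHomogeneous (q + 2))
    (hfill : SpaceFilling F f) (hsm : SmoothHyp F f) :
    ∀ a b : Fin (n + 1) → F, LinearIndependent F ![a, b] →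
      ((∃ s t : F, (s ≠ 0 ∨ t ≠ 0) ∧ FTangentAt F f a b s t ∧
          ∀ s' t' : F, (s' ≠ 0 ∨ t' ≠ 0) → FTangentAt F f a b s' t' →
            ∃ c : F, c ≠ 0 ∧ s' = c * s ∧ t' = c * t) ∨
        (ContainedLine F f a b ∧
          ∀ s t : F, (s ≠ 0 ∨ t ≠ 0) → FTangentAt F f a b s t)) :=
  lineDichotomy_deg_q_add_two_general q n F hq f hhom hfill
end

section
/- Every smooth space-filling hypersurface of degree q+2 in P^n over F_q is line-transverse-free: every F_q-line is tangent to it. -/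
open MvPolynomial

/-!
Restrict `f` to the line: `P(x) = f(x a + b)` has degree at most `q + 2`, vanishes on all of
`F_q`, and its `x^(q+2)`-coefficient is `f(a) = 0` (the coefficients of `P` are those of
`x ↦ f(a + x b)` in reverse order, `f` being homogeneous). Hence `P = (X^q - X) R` with
`deg R ≤ 1`, and `P'(c) = -R(c)` on `F_q`. If `R` has degree one, its root `c ∈ F_q` is a
rational point `c a + b` where `P` has a double root; if `R` is constant, the `x^(q+1)`-coefficient
of `P`, i.e. the derivative of `f` at `a` in direction `b`, vanishes. In both cases the line has
zero derivative along itself at a rational point of `S_f`, and Euler's identity shows that it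
lies in the tangent hyperplane there.
-/
namespace MvPolynomial

variable {R : Type*} [CommSemiring R] {ψ : MvPolynomial (Fin 2) R} {d : ℕ}

theorem aeval_fin_two_monomial {A : Type*} [CommSemiring A] [Algebra R A] (x y : A)
    (m : Fin 2 →₀ ℕ) (r : R) :
    aeval ![x, y] (monomial m r) = algebraMap R A r * (x ^ m 0 * y ^ m 1) := by
  rw [aeval_monomial, Finsupp.prod_fintype _ _ (by simp), Fin.prod_univ_two]
  rfl

theorem IsHomogeneous.natDegree_aeval_X_one_le (hψ : ψ.IsHomogeneous d) :
    (MvPolynomial.aeval ![(Polynomial.X : Polynomial R), 1] ψ).natDegree ≤ d := by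
  induction hψ using IsWeightedHomogeneous.induction_on with
  | zero => simp
  | add p q _ _ hp hq =>
    rw [map_add]
    exact (Polynomial.natDegree_add_le _ _).trans (max_le hp hq)
  | monomial m r hm =>
    rw [aeval_fin_two_monomial, one_pow, mul_one, ← Polynomial.C_eq_algebraMap]
    refine (Polynomial.natDegree_C_mul_X_pow_le _ _).trans ?_
    simp [← hm, Finsupp.weight_apply, Finsupp.sum_fintype]

theorem IsHomogeneous.reflect_aeval_X_one (hψ : ψ.IsHomogeneous d) :
    (MvPolynomial.aeval ![(Polynomial.X : Polynomial R), 1] ψ).reflect d =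
      MvPolynomial.aeval ![1, (Polynomial.X : Polynomial R)] ψ := by
  induction hψ using IsWeightedHomogeneous.induction_on with
  | zero => simp
  | add p q _ _ hp hq => simp only [map_add, Polynomial.reflect_add, hp, hq]
  | monomial m r hm =>
    have hd : m 0 + m 1 = d := by
      simpa [Finsupp.weight_apply, Finsupp.sum_fintype] using hm
    simp only [aeval_fin_two_monomial, one_pow, mul_one, one_mul, ← Polynomial.C_eq_algebraMap,
      Polynomial.reflect_C_mul_X_pow, Polynomial.revAt_le (show m 0 ≤ d by omega)]
    congr 2
    omega

variable {σ : Type*}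

theorem derivative_aeval_eq_sum_pderiv [Fintype σ] (φ : σ → Polynomial R)
    (g : MvPolynomial σ R) :
    Polynomial.derivative (aeval φ g) =
      ∑ i, aeval φ (pderiv i g) * Polynomial.derivative (φ i) := by
  induction g using MvPolynomial.induction_on with
  | C c => simp
  | add p q hp hq => simp [hp, hq, Finset.sum_add_distrib, add_mul]
  | mul_X p j hp =>
    classical
    simp only [map_mul, aeval_X, Polynomial.derivative_mul, hp, Finset.sum_mul, Derivation.leibniz,
      pderiv_X, smul_eq_mul, map_add, add_mul, Finset.sum_add_distrib, Pi.single_apply, apply_ite,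
      map_zero, mul_one, mul_zero, ite_mul, zero_mul, Finset.sum_ite_eq, Finset.mem_univ,
      if_true]
    rw [add_comm]
    congr 1
    exact Finset.sum_congr rfl fun i _ => by ring

variable {g : MvPolynomial σ R}

noncomputable def restrictLine (g : MvPolynomial σ R) (a b : σ → R) : Polynomial R :=
  aeval (fun i => Polynomial.C (a i) * Polynomial.X + Polynomial.C (b i)) g

/-- Both `g.restrictLine a b` and `g.restrictLine b a` are dehomogenisations of this binary form,
which is why they are reflections of each other when `g` is homogeneous. -/
noncomputable def lineForm (g : MvPolynomial σ R) (a b : σ → R) : MvPolynomial (Fin 2) R :=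
  aeval (fun i => C (a i) * X 0 + C (b i) * X 1) g

theorem IsHomogeneous.lineForm (hg : g.IsHomogeneous d) (a b : σ → R) :
    (g.lineForm a b).IsHomogeneous d := by
  rw [MvPolynomial.lineForm, ← Nat.one_mul d]
  exact
    hg.aeval _ fun i => (isHomogeneous_C_mul_X (a i) 0).add (isHomogeneous_C_mul_X (b i) 1)

theorem aeval_X_one_lineForm (a b : σ → R) :
    aeval ![(Polynomial.X : Polynomial R), 1] (g.lineForm a b) = g.restrictLine a b := by
  rw [lineForm, comp_aeval_apply]
  simp [restrictLine]

theorem aeval_one_X_lineForm (a b : σ → R) :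
    aeval ![1, (Polynomial.X : Polynomial R)] (g.lineForm a b) = g.restrictLine b a := by
  rw [lineForm, comp_aeval_apply]
  simp [restrictLine, add_comm]

theorem IsHomogeneous.natDegree_restrictLine_le (hg : g.IsHomogeneous d) (a b : σ → R) :
    (g.restrictLine a b).natDegree ≤ d :=
  aeval_X_one_lineForm (g := g) a b ▸ (hg.lineForm a b).natDegree_aeval_X_one_le

theorem IsHomogeneous.reflect_restrictLine (hg : g.IsHomogeneous d) (a b : σ → R) :
    (g.restrictLine a b).reflect d = g.restrictLine b a := by
  rw [← aeval_X_one_lineForm, ← aeval_one_X_lineForm, (hg.lineForm a b).reflect_aeval_X_one]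

theorem eval_restrictLine (a b : σ → R) (x : R) :
    (g.restrictLine a b).eval x = eval (fun i => x * a i + b i) g := by
  rw [restrictLine, ← Polynomial.coe_aeval_eq_eval, comp_aeval_apply]
  simp only [map_add, map_mul, Polynomial.aeval_C, Polynomial.aeval_X, Algebra.algebraMap_self,
    RingHom.id_apply, mul_comm]
  rfl

theorem derivative_restrictLine [Fintype σ] (a b : σ → R) :
    Polynomial.derivative (g.restrictLine a b) =
      ∑ i, (pderiv i g).restrictLine a b * Polynomial.C (a i) := by
  rw [restrictLine, derivative_aeval_eq_sum_pderiv]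
  refine Finset.sum_congr rfl fun i _ => ?_
  rw [Polynomial.derivative_add, Polynomial.derivative_C_mul_X, Polynomial.derivative_C, add_zero]
  rfl

end MvPolynomial

namespace Polynomial

variable {K : Type*} [Field K] [Fintype K]

theorem X_pow_card_sub_X_dvd_of_forall_eval_eq_zero {p : K[X]} (hp : ∀ c, p.eval c = 0) :
    X ^ Fintype.card K - X ∣ p := by
  have hprod : ∏ c : K, (X - C c) = X ^ Fintype.card K - X := by
    have hmonic : (X ^ Fintype.card K - X : K[X]).Monic :=
      monic_X_pow_sub (by rw [degree_X]; exact_mod_cast Fintype.one_lt_card)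
    have hroots := FiniteField.roots_X_pow_card_sub_X K
    have h := prod_multiset_X_sub_C_of_monic_of_roots_card_eq hmonic (by
      rw [hroots, FiniteField.X_pow_card_sub_X_natDegree_eq K Fintype.one_lt_card]; rfl)
    rwa [hroots] at h
  rw [← hprod]
  exact Finset.prod_dvd_of_coprime
    ((pairwise_coprime_X_sub_C Function.injective_id).set_pairwise _)
    fun c _ => dvd_iff_isRoot.mpr (hp c)

theorem eval_derivative_X_pow_card_sub_X_mul (r : K[X]) (c : K) :
    ((X ^ Fintype.card K - X) * r).derivative.eval c = -r.eval c := by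
  simp [derivative_X_pow, FiniteField.pow_card]

theorem exists_eval_derivative_eq_zero_or_coeff_card_add_one_eq_zero {p : K[X]}
    (hp : ∀ c, p.eval c = 0) (hdeg : p.natDegree ≤ Fintype.card K + 1) :
    (∃ c, p.derivative.eval c = 0) ∨ p.coeff (Fintype.card K + 1) = 0 := by
  have hq : 1 < Fintype.card K := Fintype.one_lt_card
  obtain ⟨r, rfl⟩ := X_pow_card_sub_X_dvd_of_forall_eval_eq_zero hp
  have hr : r.natDegree ≤ 1 := by
    rcases eq_or_ne r 0 with rfl | hr0
    · simp
    rw [natDegree_mul (FiniteField.X_pow_card_sub_X_ne_zero K hq) hr0,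
      FiniteField.X_pow_card_sub_X_natDegree_eq K hq] at hdeg
    omega
  obtain ⟨α, β, rfl⟩ : ∃ α β, r = C α * X + C β :=
    ⟨_, _, eq_X_add_C_of_natDegree_le_one hr⟩
  by_cases hα : α = 0
  · right
    rw [sub_mul, coeff_sub, coeff_X_mul, add_comm (Fintype.card K) 1, coeff_X_pow_mul]
    simp [hα, coeff_C]
  · left
    refine ⟨-β / α, ?_⟩
    rw [eval_derivative_X_pow_card_sub_X_mul]
    simp only [eval_add, eval_mul, eval_C, eval_X]
    field_simp
    ring

end Polynomial

section Tangency

variable {F : Type*} [Field F] {m : ℕ} {g : MvPolynomial (Fin m) F}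

theorem evalK_algebraMap_comp (g : MvPolynomial (Fin m) F) (p : Fin m → F) :
    evalK F g (algebraMap F (AlgebraicClosure F) ∘ p) = algebraMap F _ (eval p g) := by
  rw [evalK, eval_map, eval₂_comp]

theorem TangentLine.symm {a b : Fin m → F} (h : TangentLine F g b a) : TangentLine F g a b := by
  obtain ⟨s, t, hst, hs, htan⟩ := h
  have hpt : linePt F b a s t = linePt F a b t s := funext fun i => add_comm _ _
  rw [hpt] at hs htan
  exact ⟨t, s, hst.symm, hs, htan.imp id And.symm⟩

theorem tangentLine_of_eval_pderiv_sum_eq_zero (a b : Fin m → F) (x : F)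
    (hg : eval (fun i => x * a i + b i) g = 0)
    (ha : ∑ j, eval (fun i => x * a i + b i) (pderiv j g) * a j = 0)
    (hb : ∑ j, eval (fun i => x * a i + b i) (pderiv j g) * b j = 0) :
    TangentLine F g a b := by
  have hpt : linePt F a b (algebraMap F _ x) 1 =
      algebraMap F (AlgebraicClosure F) ∘ fun i => x * a i + b i := by
    ext i
    simp [linePt]
  refine ⟨algebraMap F _ x, 1, Or.inr one_ne_zero, ?_, Or.inr ⟨?_, ?_⟩⟩ <;>
    simp only [hpt, evalK_algebraMap_comp, ← map_mul, ← map_sum, hg, ha, hb, map_zero]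

theorem tangentLine_of_eval_derivative_restrictLine_eq_zero {d : ℕ} (hg : g.IsHomogeneous d)
    (hfill : SpaceFilling F g) (a b : Fin m → F) (x : F)
    (hx : (g.restrictLine a b).derivative.eval x = 0) : TangentLine F g a b := by
  set p : Fin m → F := fun i => x * a i + b i
  have ha : ∑ j, eval p (pderiv j g) * a j = 0 := by
    simpa [derivative_restrictLine, Polynomial.eval_finsetSum, eval_restrictLine] using hx
  have heuler : ∑ j, p j * eval p (pderiv j g) = 0 := by
    simpa [hfill p] using congrArg (eval p) hg.sum_X_mul_pderiv
  refine tangentLine_of_eval_pderiv_sum_eq_zero a b x (hfill p) ha ?_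
  calc ∑ j, eval p (pderiv j g) * b j
      = ∑ j, p j * eval p (pderiv j g) - x * ∑ j, eval p (pderiv j g) * a j := by
        rw [Finset.mul_sum, ← Finset.sum_sub_distrib]
        exact Finset.sum_congr rfl fun j _ => by ring
    _ = 0 := by rw [heuler, ha, mul_zero, sub_zero]

end Tangency

theorem lineTransverseFree_deg_q_add_two_general (q n : ℕ) (F : Type*) [Field F] [Fintype F]
    (hq : Fintype.card F = q)
    (f : MvPolynomial (Fin (n + 1)) F) (hhom : f.IsHomogeneous (q + 2))
    (hfill : SpaceFilling F f) :
    ∀ a b : Fin (n + 1) → F, LinearIndependent F ![a, b] → TangentLine F f a b := by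
  intro a b _
  subst hq
  have hvanish : ∀ c, (f.restrictLine a b).eval c = 0 := fun c => by
    rw [eval_restrictLine]; exact hfill _
  have hdeg : (f.restrictLine a b).natDegree ≤ Fintype.card F + 1 := by
    -- the top coefficient is `f a`
    refine Polynomial.natDegree_le_pred (hhom.natDegree_restrictLine_le a b) ?_
    rw [← hhom.reflect_restrictLine b a, Polynomial.coeff_reflect, Polynomial.revAt_le le_rfl,
      Nat.sub_self, Polynomial.coeff_zero_eq_eval_zero, eval_restrictLine]
    exact hfill _
  rcases Polynomial.exists_eval_derivative_eq_zero_or_coeff_card_add_one_eq_zero hvanish hdeg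
    with ⟨x, hx⟩ | htop
  · exact tangentLine_of_eval_derivative_restrictLine_eq_zero hhom hfill a b x hx
  · -- tangent at the point `a`
    refine (tangentLine_of_eval_derivative_restrictLine_eq_zero hhom hfill b a 0 ?_).symm
    rw [← hhom.reflect_restrictLine a b, ← Polynomial.coeff_zero_eq_eval_zero,
      Polynomial.coeff_derivative, Polynomial.coeff_reflect, Polynomial.revAt_le (by omega)]
    simpa using htop

/-- Every smooth space-filling hypersurface of degree `q+2` in `ℙⁿ` over `F_q`
is line-transverse-free: every `F_q`-line is tangent to it. -/
theorem lineTransverseFree_deg_q_add_two (q n : ℕ) (F : Type*) [Field F] [Fintype F]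
    (hq : Fintype.card F = q)
    (f : MvPolynomial (Fin (n + 1)) F) (hf0 : f ≠ 0) (hhom : f.IsHomogeneous (q + 2))
    (hfill : SpaceFilling F f) (hsm : SmoothHyp F f) :
    ∀ a b : Fin (n + 1) → F, LinearIndependent F ![a, b] → TangentLine F f a b :=
  lineTransverseFree_deg_q_add_two_general q n F hq f hhom hfill
end

section
/- If S_f ⊂ P^n is a hypersurface of degree d ≥ 2 defined over F_q that is tangent to every F_q-line (line-transverse-free), then the cone S_F ⊂ P^{n+1} defined by F(x_0,...,x_{n+1}) = f(x_0,...,x_n) is also tangent to every F_q-line of P^{n+1}. -/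
open MvPolynomial

/-! Project a line of `ℙ^{n+1}` from the vertex `(0 : … : 0 : 1)` of the cone. If the projection
is again a line, the tangency of `S_f` along it lifts, because the equation of the cone and its
gradient only see the first `n + 1` coordinates (the last partial derivative vanishes). Otherwise
the line passes through the vertex, where the equation and all its partial derivatives vanish
since they are homogeneous of positive degree `d` and `d - 1`. -/

section Cone

variable {F : Type*} [Field F] {m : ℕ}

lemma evalK_rename {k : ℕ} (σ : Fin m → Fin k) (g : MvPolynomial (Fin m) F)
    (v : Fin k → AlgebraicClosure F) : evalK F (rename σ g) v = evalK F g (v ∘ σ) := by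
  rw [evalK, evalK, map_rename, eval_rename]

lemma linePt_comp {k : ℕ} (σ : Fin m → Fin k) (a b : Fin k → F) (s t : AlgebraicClosure F) :
    linePt F a b s t ∘ σ = linePt F (a ∘ σ) (b ∘ σ) s t :=
  rfl

lemma linePt_algebraMap (a b : Fin m → F) (c e : F) :
    linePt F a b (algebraMap F _ c) (algebraMap F _ e) =
      algebraMap F (AlgebraicClosure F) ∘ (c • a + e • b) := by
  ext i
  simp [linePt]

lemma evalK_zero_of_isHomogeneous {d : ℕ} {g : MvPolynomial (Fin m) F} (hg : g.IsHomogeneous d)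
    (hd : d ≠ 0) : evalK F g 0 = 0 := by
  rw [evalK, eval_zero, constantCoeff_map, constantCoeff_eq,
    hg.coeff_eq_zero (by simpa using hd.symm), map_zero]

lemma pderiv_last_rename_castAdd (g : MvPolynomial (Fin m) F) :
    pderiv (Fin.last m) (rename (Fin.castAdd 1) g) = 0 := by
  refine pderiv_eq_zero_of_notMem_vars fun h => ?_
  obtain ⟨j, -, hj⟩ := Finset.mem_image.mp (vars_rename _ _ h)
  exact Fin.castSucc_ne_last j hj

lemma evalK_pderiv_last_rename_castAdd (g : MvPolynomial (Fin m) F)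
    (v : Fin (m + 1) → AlgebraicClosure F) :
    evalK F (pderiv (Fin.last m) (rename (Fin.castAdd 1) g)) v = 0 := by
  simp [pderiv_last_rename_castAdd, evalK]

lemma evalK_pderiv_rename_castSucc (g : MvPolynomial (Fin m) F) (j : Fin m)
    (v : Fin (m + 1) → AlgebraicClosure F) :
    evalK F (pderiv j.castSucc (rename (Fin.castAdd 1) g)) v =
      evalK F (pderiv j g) (v ∘ Fin.castAdd 1) := by
  rw [Fin.castSucc, pderiv_rename (Fin.castAdd_injective _ _), evalK_rename]

lemma evalK_pderiv_rename_castAdd_eq_zero_iff (g : MvPolynomial (Fin m) F)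
    (v : Fin (m + 1) → AlgebraicClosure F) :
    (∀ i, evalK F (pderiv i (rename (Fin.castAdd 1) g)) v = 0) ↔
      ∀ j, evalK F (pderiv j g) (v ∘ Fin.castAdd 1) = 0 := by
  simp only [Fin.forall_fin_succ', evalK_pderiv_rename_castSucc,
    evalK_pderiv_last_rename_castAdd, and_true]

lemma sum_evalK_pderiv_rename_castAdd_mul (g : MvPolynomial (Fin m) F)
    (v : Fin (m + 1) → AlgebraicClosure F) (w : Fin (m + 1) → F) :
    ∑ i, evalK F (pderiv i (rename (Fin.castAdd 1) g)) v * algebraMap F _ (w i) =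
      ∑ j, evalK F (pderiv j g) (v ∘ Fin.castAdd 1) * algebraMap F _ ((w ∘ Fin.castAdd 1) j) := by
  simp only [Fin.sum_univ_castSucc, evalK_pderiv_rename_castSucc,
    evalK_pderiv_last_rename_castAdd, zero_mul, add_zero]
  rfl

theorem TangentLine.rename_castAdd {g : MvPolynomial (Fin m) F} {a b : Fin (m + 1) → F}
    (h : TangentLine F g (a ∘ Fin.castAdd 1) (b ∘ Fin.castAdd 1)) :
    TangentLine F (rename (Fin.castAdd 1) g) a b := by
  obtain ⟨s, t, hst, hg, hsing⟩ := h
  refine ⟨s, t, hst, by rwa [evalK_rename, linePt_comp], ?_⟩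
  rwa [evalK_pderiv_rename_castAdd_eq_zero_iff, sum_evalK_pderiv_rename_castAdd_mul,
    sum_evalK_pderiv_rename_castAdd_mul, linePt_comp]

theorem tangentLine_rename_castAdd_of_vertex_mem {d : ℕ} {g : MvPolynomial (Fin m) F}
    (hg : g.IsHomogeneous d) (hd : 2 ≤ d) {a b : Fin (m + 1) → F} {c e : F}
    (hce : c ≠ 0 ∨ e ≠ 0) (hvertex : c • (a ∘ Fin.castAdd 1) + e • (b ∘ Fin.castAdd 1) = 0) :
    TangentLine F (rename (Fin.castAdd 1) g) a b := by
  have hz : linePt F a b (algebraMap F _ c) (algebraMap F _ e) ∘ Fin.castAdd 1 = 0 := by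
    rw [linePt_comp, linePt_algebraMap, hvertex]
    exact funext fun _ => map_zero _
  refine ⟨algebraMap F _ c, algebraMap F _ e, by simpa using hce, ?_, Or.inl ?_⟩
  · rw [evalK_rename, hz]
    exact evalK_zero_of_isHomogeneous hg (by omega)
  · rw [evalK_pderiv_rename_castAdd_eq_zero_iff, hz]
    exact fun j => evalK_zero_of_isHomogeneous hg.pderiv (by omega)

end Cone

theorem coneLineTransverseFree_general (n d : ℕ) (hd : 2 ≤ d) (F : Type*) [Field F]
    (f : MvPolynomial (Fin (n + 1)) F) (hhom : f.IsHomogeneous d)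
    (hltf : ∀ a b : Fin (n + 1) → F, LinearIndependent F ![a, b] → TangentLine F f a b) :
    ∀ a b : Fin (n + 1 + 1) → F, LinearIndependent F ![a, b] →
      TangentLine F (rename (Fin.castAdd 1) f) a b := by
  intro a b _
  by_cases hind : LinearIndependent F ![a ∘ Fin.castAdd 1, b ∘ Fin.castAdd 1]
  · exact (hltf _ _ hind).rename_castAdd
  · obtain ⟨c, e, hvertex, hce⟩ : ∃ c e : F,
        c • (a ∘ Fin.castAdd 1) + e • (b ∘ Fin.castAdd 1) = 0 ∧ (c ≠ 0 ∨ e ≠ 0) := by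
      simpa only [LinearIndependent.pair_iff, not_forall, not_and_or, exists_prop] using hind
    exact tangentLine_rename_castAdd_of_vertex_mem hhom hd hce hvertex

/-- If the hypersurface of `f` in `ℙⁿ` over `F_q` (of degree `d ≥ 2`) is
tangent to every `F_q`-line, then the cone `F(x_0,...,x_{n+1}) = f(x_0,...,x_n)` in
`ℙ^{n+1}` is also tangent to every `F_q`-line. -/
theorem coneLineTransverseFree (q n d : ℕ) (hd : 2 ≤ d) (F : Type*) [Field F] [Fintype F]
    (hq : Fintype.card F = q)
    (f : MvPolynomial (Fin (n + 1)) F) (hf0 : f ≠ 0) (hhom : f.IsHomogeneous d)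
    (hltf : ∀ a b : Fin (n + 1) → F, LinearIndependent F ![a, b] → TangentLine F f a b) :
    ∀ a b : Fin (n + 1 + 1) → F, LinearIndependent F ![a, b] →
      TangentLine F (rename (Fin.castAdd 1) f) a b :=
  coneLineTransverseFree_general n d hd F f hhom hltf
end
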